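/- arXiv:1308.2473 — 6 statements merged into one kernel-verified Lean document; each statement's English description precedes it below -/
import Mathlib

section
/- For any finite metric space (X, D) with opening cost f_i > 0 at each point x_i, there exists a unique nonnegative real r_i such that the sum over all y in the closed ball B(x_i, r_i) of (r_i - D(x_i, y)) equals f_i. -/
/-! Writing the ball sum as `∑_y (r - D(x, y))⁺` makes it continuous in `r`; it vanishes at
`r = 0`, and the centre `y = x` contributes `r` itself, so it is at least `r` and strictly
increasing on `[0, ∞)`. The intermediate value theorem then gives a radius, and strict
monotonicity makes it unique. -/

open Finset

section HingeSum

variable {ι : Type*} (s : Finset ι) (d : ι → ℝ)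

noncomputable def hingeSum (r : ℝ) : ℝ := ∑ i ∈ s, max (r - d i) 0

theorem sum_filter_le_sub_eq_hingeSum (r : ℝ) [DecidablePred fun i => d i ≤ r] :
    ∑ i ∈ s.filter (fun i => d i ≤ r), (r - d i) = hingeSum s d r := by
  rw [hingeSum, sum_filter]
  refine sum_congr rfl fun i _ => ?_
  split_ifs with h
  · exact (max_eq_left (sub_nonneg.mpr h)).symm
  · exact (max_eq_right (sub_nonpos.mpr (not_le.mp h).le)).symm

theorem continuous_hingeSum : Continuous (hingeSum s d) := by
  unfold hingeSum
  fun_prop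

theorem hingeSum_eq_zero_of_le {r : ℝ} (h : ∀ i ∈ s, r ≤ d i) : hingeSum s d r = 0 :=
  sum_eq_zero fun i hi => max_eq_right (sub_nonpos.mpr (h i hi))

theorem sub_le_hingeSum {i : ι} (hi : i ∈ s) (r : ℝ) : r - d i ≤ hingeSum s d r :=
  (le_max_left _ _).trans <|
    single_le_sum (f := fun j => max (r - d j) 0) (fun _ _ => le_max_right _ _) hi

theorem strictMonoOn_hingeSum {i : ι} (hi : i ∈ s) :
    StrictMonoOn (hingeSum s d) (Set.Ici (d i)) := by
  intro a ha b _ hab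
  refine sum_lt_sum (fun j _ => max_le_max (by linarith) le_rfl) ⟨i, hi, ?_⟩
  rw [max_eq_left (sub_nonneg.mpr ha), max_eq_left (by linarith [Set.mem_Ici.mp ha])]
  linarith

end HingeSum

open scoped Classical in
/-- For any finite metric space with opening cost `f x > 0` at each point, there is a
unique nonnegative real `r` such that `∑_{y ∈ B(x,r)} (r - D(x,y)) = f x`. -/
theorem unique_characteristic_radius {X : Type*} [Fintype X] [MetricSpace X]
    (f : X → ℝ) (hf : ∀ x, 0 < f x) (x : X) :
    ∃! r : ℝ, 0 ≤ r ∧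
      ∑ y ∈ univ.filter (fun y => dist x y ≤ r), (r - dist x y) = f x := by
  set G := hingeSum univ (dist x)
  simp_rw [sum_filter_le_sub_eq_hingeSum]
  have hmono : StrictMonoOn G (Set.Ici 0) := by
    simpa using strictMonoOn_hingeSum univ (dist x) (mem_univ x)
  have hG0 : G 0 = 0 := hingeSum_eq_zero_of_le _ _ fun y _ => dist_nonneg
  have hGf : f x ≤ G (f x) := by simpa using sub_le_hingeSum univ (dist x) (mem_univ x) (f x)
  obtain ⟨r, hr, hGr⟩ : ∃ r ∈ Set.Icc 0 (f x), G r = f x :=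
    intermediate_value_Icc (hf x).le (continuous_hingeSum _ _).continuousOn
      ⟨hG0.trans_le (hf x).le, hGf⟩
  exact ⟨r, ⟨hr.1, hGr⟩, fun s ⟨hs, hGs⟩ => hmono.injOn hs hr.1 (hGs.trans hGr.symm)⟩
end

section
/- For any nonempty configuration F ⊆ X, the total cost FacLoc(F) = sum_{x_i in F} f_i + sum_{j=1}^n D(F, x_j) equals the sum of charges: FacLoc(F) = sum_{i=1}^n charge(x_i, F), where charge(x_i, F) = D(x_i, F) + sum_{x_j in F} max(0, r_j - D(x_j, x_i)) and D(x_i, F) = min_{x_j in F} D(x_i, x_j). -/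
open Finset

theorem facLoc_eq_sum_charges_general {X : Type*} [Fintype X] [MetricSpace X]
    (f r : X → ℝ)
    (hfr : ∀ i, f i = ∑ k, max 0 (r i - dist i k))
    (F : Finset X) (hF : F.Nonempty) :
    (∑ i ∈ F, f i) + (∑ j, F.inf' hF (fun x => dist x j))
      = ∑ i, (F.inf' hF (fun j => dist i j) + ∑ j ∈ F, max 0 (r j - dist j i)) := by
  have hdist : ∀ i, F.inf' hF (fun x => dist x i) = F.inf' hF (fun j => dist i j) := fun i => by
    simp_rw [dist_comm]
  rw [sum_add_distrib, add_comm, sum_comm]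
  simp_rw [hfr, hdist]

/-- The facility location cost of a nonempty configuration `F` equals the sum of charges:
`FacLoc(F) = ∑ᵢ charge(xᵢ, F)`, where `f i = ∑ₖ max 0 (r i - D(xᵢ,xₖ))` (the defining
property of the characteristic radii `r i`). -/
theorem facLoc_eq_sum_charges {X : Type*} [Fintype X] [MetricSpace X]
    (f r : X → ℝ) (hf : ∀ i, 0 < f i) (hr : ∀ i, 0 ≤ r i)
    (hfr : ∀ i, f i = ∑ k, max 0 (r i - dist i k))
    (F : Finset X) (hF : F.Nonempty) :
    (∑ i ∈ F, f i) + (∑ j, F.inf' hF (fun x => dist x j))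
      = ∑ i, (F.inf' hF (fun j => dist i j) + ∑ j ∈ F, max 0 (r j - dist j i)) :=
  facLoc_eq_sum_charges_general f r hfr F hF
end

section
/- In the open facility set F* produced by the algorithm, there is at most one open facility x_j in F* with D(x_j, x_i) <= r_j, for any fixed point x_i. Formally: if F* ⊆ X satisfies (a) any two members of F* in the same class V_k are non-adjacent, i.e., D(x_j, x_l) > r_j + r_l for x_j, x_l in F* ∩ V_k with j ≠ l, and (b) for any x_j, x_l in F* in different classes with r_j < r_l, D(x_j, x_l) > 2*r_l, then for any x_i there is at most one x_j in F* with D(x_j, x_i) <= r_j. -/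
open Finset

theorem eq_of_dist_le_of_dist_le_of_add_lt_dist {X : Type*} [MetricSpace X] {r : X → ℝ}
    {s : Set X} (hsep : ∀ j ∈ s, ∀ l ∈ s, j ≠ l → r j + r l < dist j l)
    {i j l : X} (hj : j ∈ s) (hl : l ∈ s) (hji : dist j i ≤ r j) (hli : dist l i ≤ r l) :
    j = l := by
  by_contra hne
  have hjl : dist j l ≤ r j + r l := (dist_triangle_right j l i).trans (add_le_add hji hli)
  exact (hsep j hj l hl hne).not_ge hjl

theorem at_most_one_covering_facility_general {X : Type*} [MetricSpace X]
    (r : X → ℝ) (V : X → ℕ)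
    (hclass : ∀ a b : X, V a ≠ V b → r a ≠ r b)
    (F : Finset X)
    (ha : ∀ j ∈ F, ∀ l ∈ F, j ≠ l → V j = V l → dist j l > r j + r l)
    (hb : ∀ j ∈ F, ∀ l ∈ F, V j ≠ V l → r j < r l → dist j l > 2 * r l)
    (i : X) :
    ∀ j ∈ F, ∀ l ∈ F, dist j i ≤ r j → dist l i ≤ r l → j = l := by
  have hsep : ∀ j ∈ (F : Set X), ∀ l ∈ (F : Set X), j ≠ l → r j + r l < dist j l := by
    intro j hj l hl hne
    by_cases hV : V j = V l
    · exact ha j hj l hl hne hV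
    -- across classes, `r j + r l ≤ 2 * max (r j) (r l)`
    rcases (hclass j l hV).lt_or_gt with hlt | hgt
    · linarith [hb j hj l hl hV hlt]
    · linarith [hb l hl j hj (Ne.symm hV) hgt, dist_comm j l]
  intro j hj l hl hji hli
  exact eq_of_dist_le_of_dist_le_of_add_lt_dist hsep (mem_coe.2 hj) (mem_coe.2 hl) hji hli

/-- At most one open facility `xⱼ ∈ F*` satisfies `D(xⱼ,xᵢ) ≤ rⱼ`, given that
(a) members of `F*` in the same class are non-adjacent (`D > rⱼ + r_l`), and
(b) members of `F*` in different classes with `rⱼ < r_l` satisfy `D > 2 r_l`.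
(Points in different classes have different radii, since classes are radius ranges.) -/
theorem at_most_one_covering_facility {X : Type*} [Fintype X] [MetricSpace X]
    (r : X → ℝ) (hr : ∀ i, 0 ≤ r i) (V : X → ℕ)
    (hclass : ∀ a b : X, V a ≠ V b → r a ≠ r b)
    (F : Finset X)
    (ha : ∀ j ∈ F, ∀ l ∈ F, j ≠ l → V j = V l → dist j l > r j + r l)
    (hb : ∀ j ∈ F, ∀ l ∈ F, V j ≠ V l → r j < r l → dist j l > 2 * r l)
    (i : X) :
    ∀ j ∈ F, ∀ l ∈ F, dist j i ≤ r j → dist l i ≤ r l → j = l :=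
  at_most_one_covering_facility_general r V hclass F ha hb i
end

section
/- Under the hypotheses of the algorithm's output F*, the 'overlap' contribution at any point x_i is bounded: sum_{x_j in F*} max(0, r_j - D(x_j, x_i)) <= c_0 * r̄_i, where c_0 = 1 + 1/sqrt(2). -/
/-!
At most one open facility covers `xᵢ`, so the sum has at most one positive term, coming from
some `xⱼ`. Let `xₖ` attain `r̄ᵢ = D(xᵢ,xₖ) + rₖ`. If `xₖ` lies in a strictly lower class than
`xⱼ`, the opening rule puts it at distance more than `2 rⱼ` from `xⱼ`, and the triangle
inequality gives `rⱼ - D(xⱼ,xᵢ) ≤ D(xᵢ,xₖ)`. Otherwise `rⱼ ≤ c₀ rₖ`. Either way the term is at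
most `c₀ r̄ᵢ`, since `c₀ ≥ 1`.
-/

open Finset

theorem Finset.sum_max_zero_le_of_pos_unique {ι : Type*} {F : Finset ι} {g : ι → ℝ} {B : ℝ}
    (hB : 0 ≤ B) (huniq : ∀ j ∈ F, ∀ l ∈ F, 0 < g j → 0 < g l → j = l)
    (hg : ∀ j ∈ F, g j ≤ B) :
    ∑ j ∈ F, max 0 (g j) ≤ B := by
  by_cases hpos : ∃ j ∈ F, 0 < g j
  · obtain ⟨j, hjF, hj⟩ := hpos
    have hsingle : ∑ l ∈ F, max 0 (g l) = max 0 (g j) := by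
      refine sum_eq_single_of_mem j hjF fun l hlF hlj => max_eq_left ?_
      exact not_lt.mp fun hl => hlj (huniq l hlF j hjF hl hj)
    rw [hsingle]
    exact max_le hB (hg j hjF)
  · push Not at hpos
    rwa [sum_eq_zero fun l hl => max_eq_left (hpos l hl)]

section PseudoMetricSpace

variable {X : Type*} [PseudoMetricSpace X]

theorem sub_dist_le_dist_of_two_mul_lt_dist {a : ℝ} {x y z : X} (ha : 0 ≤ a)
    (h : 2 * a < dist x z) : a - dist x y ≤ dist y z := by
  linarith [dist_triangle x y z]

theorem sub_dist_le_mul_dist_add {a b c : ℝ} {x y z : X} (hc : 1 ≤ c) (ha : 0 ≤ a)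
    (hb : 0 ≤ b) (h : a ≤ c * b ∨ 2 * a < dist x z) :
    a - dist x y ≤ c * (dist y z + b) := by
  have hyz : dist y z + b ≤ c * (dist y z + b) :=
    le_mul_of_one_le_left (add_nonneg dist_nonneg hb) hc
  rcases h with hnear | hfar
  · nlinarith [dist_nonneg (x := x) (y := y), dist_nonneg (x := y) (y := z)]
  · linarith [sub_dist_le_dist_of_two_mul_lt_dist (y := y) ha hfar]

end PseudoMetricSpace

theorem overlap_contribution_bound_general {X : Type*} [Fintype X] [Nonempty X] [MetricSpace X]
    (r : X → ℝ) (hr : ∀ i, 0 ≤ r i)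
    (c0 : ℝ) (hc0 : c0 = 1 + 1/Real.sqrt 2)
    (rb : X → ℝ)
    (hrb : ∀ i, rb i = univ.inf' univ_nonempty (fun j => dist i j + r j))
    (V : X → ℕ)
    (hVr : ∀ a b : X, c0 * r a < r b → V a < V b)
    (F : Finset X) (i : X)
    (ha : ∀ j ∈ F, ∀ l ∈ F, dist j i ≤ r j → dist l i ≤ r l → j = l)
    (hc : ∀ j ∈ F, ∀ i' : X, V i' < V j → dist j i' > 2 * r j) :
    ∑ j ∈ F, max 0 (r j - dist j i) ≤ c0 * rb i := by
  have hc0_one : 1 ≤ c0 := hc0 ▸ le_add_of_nonneg_right (by positivity)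
  obtain ⟨k, -, hk⟩ := exists_mem_eq_inf' univ_nonempty fun j => dist i j + r j
  have hrbk : rb i = dist i k + r k := (hrb i).trans hk
  have hrb_nonneg : 0 ≤ rb i := hrbk ▸ add_nonneg dist_nonneg (hr k)
  refine sum_max_zero_le_of_pos_unique (by positivity)
    (fun j hj l hl hjpos hlpos => ha j hj l hl (by linarith) (by linarith)) fun j hj => ?_
  have hnear_or_far : r j ≤ c0 * r k ∨ 2 * r j < dist j k :=
    (le_or_gt (r j) (c0 * r k)).imp_right fun hlt => hc j hj k (hVr k j hlt)
  rw [hrbk]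
  exact sub_dist_le_mul_dist_add hc0_one (hr j) (hr k) hnear_or_far

/-- The overlap contribution at any point `xᵢ` is bounded:
`∑_{xⱼ ∈ F*} max(0, rⱼ - D(xⱼ,xᵢ)) ≤ c₀ * r̄ᵢ` with `c₀ = 1 + 1/√2`. -/
theorem overlap_contribution_bound {X : Type*} [Fintype X] [Nonempty X] [MetricSpace X]
    (r : X → ℝ) (hr : ∀ i, 0 ≤ r i)
    (c0 : ℝ) (hc0 : c0 = 1 + 1/Real.sqrt 2)
    (rb : X → ℝ)
    (hrb : ∀ i, rb i = univ.inf' univ_nonempty (fun j => dist i j + r j))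
    (V : X → ℕ)
    (hVr : ∀ a b : X, c0 * r a < r b → V a < V b)
    (F : Finset X) (i : X)
    (ha : ∀ j ∈ F, ∀ l ∈ F, dist j i ≤ r j → dist l i ≤ r l → j = l)
    (hb : ∀ j ∈ F, dist j i ≤ r j → r j < c0 * r i)
    (hc : ∀ j ∈ F, ∀ i' : X, V i' < V j → dist j i' > 2 * r j) :
    ∑ j ∈ F, max 0 (r j - dist j i) ≤ c0 * rb i :=
  overlap_contribution_bound_general r hr c0 hc0 rb hrb V hVr F i ha hc
end

section
/- Let G be a finite graph on vertex set X, and suppose a set R ⊆ X is constructed iteratively as follows: at each step, a set T of remaining vertices is chosen, an MIS L of the subgraph induced by T (within the current remaining graph) is added to R, and T together with its neighborhood N(T) is removed. If the process continues until no vertices remain, then the final R is an independent set in G and every vertex of X is within distance 2 of R in G. -/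
/-!
A vertex `v` leaves the remaining graph in some round `t`, either because `v ∈ T t` or because
`v` is adjacent to some `w ∈ T t`. By maximality of `L t` inside `T t`, every vertex of `T t` is
in `L t` or adjacent to it, so `v` is within distance `2` of `L t ⊆ R`. Independence of `R` across
rounds holds because everything adjacent to `T s` is removed in round `s`, so no later `L t`
contains a neighbour of `L s ⊆ T s`.
-/

open Finset

theorem Nat.exists_lt_and_not_succ_of_zero_of_not {p : ℕ → Prop} {K : ℕ} (h0 : p 0)
    (hK : ¬ p K) : ∃ t < K, p t ∧ ¬ p (t + 1) := by
  induction K with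
  | zero => exact absurd h0 hK
  | succ K ih =>
    by_cases hpK : p K
    · exact ⟨K, K.lt_succ_self, hpK, hK⟩
    · obtain ⟨t, htK, ht⟩ := ih hpK
      exact ⟨t, htK.trans K.lt_succ_self, ht⟩

namespace SimpleGraph

variable {X : Type*} (G : SimpleGraph X)

theorem exists_within_two_of_maximal {T L : Finset X}
    (hLmax : ∀ v ∈ T, v ∉ L → ∃ u ∈ L, G.Adj u v) {v : X} (hv : v ∈ T ∨ ∃ w ∈ T, G.Adj w v) :
    ∃ u ∈ L, v = u ∨ G.Adj v u ∨ ∃ w : X, G.Adj v w ∧ G.Adj w u := by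
  have dominated : ∀ w ∈ T, ∃ u ∈ L, w = u ∨ G.Adj w u := fun w hw => by
    by_cases hwL : w ∈ L
    · exact ⟨w, hwL, Or.inl rfl⟩
    · obtain ⟨u, huL, hadj⟩ := hLmax w hw hwL
      exact ⟨u, huL, Or.inr hadj.symm⟩
  rcases hv with hvT | ⟨w, hwT, hwv⟩
  · obtain ⟨u, huL, rfl | hadj⟩ := dominated v hvT
    · exact ⟨v, huL, Or.inl rfl⟩
    · exact ⟨u, huL, Or.inr (Or.inl hadj)⟩
  · obtain ⟨u, huL, rfl | hadj⟩ := dominated w hwT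
    · exact ⟨w, huL, Or.inr (Or.inl hwv.symm)⟩
    · exact ⟨u, huL, Or.inr (Or.inr ⟨w, hwv.symm, hadj⟩)⟩

end SimpleGraph

section RulingProcess

variable {X : Type*} {G : SimpleGraph X} {K : ℕ} {T Rem : ℕ → Finset X}

theorem antitoneOn_remaining
    (hRemStep : ∀ t < K, ∀ v, v ∈ Rem (t + 1) ↔ v ∈ Rem t ∧ v ∉ T t ∧ ∀ u ∈ T t, ¬ G.Adj u v) :
    AntitoneOn Rem (Set.Iic K) :=
  antitoneOn_of_succ_le Set.ordConnected_Iic fun t _ _ ht v hv =>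
    ((hRemStep t (Order.succ_le_iff.1 ht) v).1 hv).1

theorem not_adj_of_mem_remaining_of_lt
    (hRemStep : ∀ t < K, ∀ v, v ∈ Rem (t + 1) ↔ v ∈ Rem t ∧ v ∉ T t ∧ ∀ u ∈ T t, ¬ G.Adj u v)
    {s t : ℕ} (hst : s < t) (htK : t ≤ K) {u v : X} (hu : u ∈ T s) (hv : v ∈ Rem t) :
    ¬ G.Adj u v :=
  have hv' : v ∈ Rem (s + 1) :=
    antitoneOn_remaining hRemStep (Set.mem_Iic.2 (by omega)) (Set.mem_Iic.2 htK) hst hv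
  ((hRemStep s (by omega) v).1 hv').2.2 u hu

theorem mem_or_adj_of_removed
    (hRemStep : ∀ t < K, ∀ v, v ∈ Rem (t + 1) ↔ v ∈ Rem t ∧ v ∉ T t ∧ ∀ u ∈ T t, ¬ G.Adj u v)
    {t : ℕ} (ht : t < K) {v : X} (hv : v ∈ Rem t) (hv' : v ∉ Rem (t + 1)) :
    v ∈ T t ∨ ∃ w ∈ T t, G.Adj w v := by
  by_contra! hfar
  exact hv' ((hRemStep t ht v).2 ⟨hv, hfar⟩)

theorem biUnion_pairwise_not_adj [DecidableEq X] {L : ℕ → Finset X}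
    (hT : ∀ t < K, T t ⊆ Rem t)
    (hLsub : ∀ t < K, L t ⊆ T t)
    (hLind : ∀ t < K, ∀ u ∈ L t, ∀ v ∈ L t, u ≠ v → ¬ G.Adj u v)
    (hRemStep : ∀ t < K, ∀ v, v ∈ Rem (t + 1) ↔ v ∈ Rem t ∧ v ∉ T t ∧ ∀ u ∈ T t, ¬ G.Adj u v) :
    ∀ u ∈ (range K).biUnion L, ∀ v ∈ (range K).biUnion L, u ≠ v → ¬ G.Adj u v := by
  simp only [mem_biUnion, mem_range]
  rintro u ⟨s, hs, hus⟩ v ⟨t, ht, hvt⟩ huv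
  have mem_remaining : ∀ {t x}, t < K → x ∈ L t → x ∈ Rem t := fun ht hx =>
    hT _ ht (hLsub _ ht hx)
  rcases lt_trichotomy s t with hst | rfl | hts
  · exact not_adj_of_mem_remaining_of_lt hRemStep hst ht.le (hLsub s hs hus)
      (mem_remaining ht hvt)
  · exact hLind s hs u hus v hvt huv
  · exact fun hadj => not_adj_of_mem_remaining_of_lt hRemStep hts hs.le (hLsub t ht hvt)
      (mem_remaining hs hus) hadj.symm

end RulingProcess

/-- The iterative process (pick a test set `T` among remaining vertices, add an MIS `L` of
the induced subgraph on `T` to `R`, remove `T` together with its neighborhood in the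
remaining graph) produces, once no vertices remain, a set `R` that is independent in `G`
and such that every vertex is within distance `2` of `R`. -/
theorem iterative_process_gives_two_ruling_set {X : Type*} [Fintype X] [DecidableEq X]
    (G : SimpleGraph X) [DecidableRel G.Adj]
    (K : ℕ) (T L Rem : ℕ → Finset X) (R : Finset X)
    (hRem0 : Rem 0 = Finset.univ)
    (hT : ∀ t < K, T t ⊆ Rem t)
    (hLsub : ∀ t < K, L t ⊆ T t)
    (hLind : ∀ t < K, ∀ u ∈ L t, ∀ v ∈ L t, u ≠ v → ¬ G.Adj u v)
    (hLmax : ∀ t < K, ∀ v ∈ T t, v ∉ L t → ∃ u ∈ L t, G.Adj u v)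
    (hRemStep : ∀ t < K,
      Rem (t+1) = (Rem t).filter (fun v => v ∉ T t ∧ ∀ u ∈ T t, ¬ G.Adj u v))
    (hEnd : Rem K = ∅)
    (hR : R = (Finset.range K).biUnion L) :
    (∀ u ∈ R, ∀ v ∈ R, u ≠ v → ¬ G.Adj u v)
    ∧ ∀ v : X, ∃ u ∈ R, v = u ∨ G.Adj v u ∨ ∃ w : X, G.Adj v w ∧ G.Adj w u := by
  subst hR
  have mem_remaining_succ_iff : ∀ t < K, ∀ v,
      v ∈ Rem (t + 1) ↔ v ∈ Rem t ∧ v ∉ T t ∧ ∀ u ∈ T t, ¬ G.Adj u v := fun t ht v => by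
    rw [hRemStep t ht, mem_filter]
  refine ⟨biUnion_pairwise_not_adj hT hLsub hLind mem_remaining_succ_iff, fun v => ?_⟩
  obtain ⟨t, htK, hv, hv'⟩ := Nat.exists_lt_and_not_succ_of_zero_of_not (p := fun n => v ∈ Rem n)
    (hRem0 ▸ mem_univ v) (hEnd ▸ notMem_empty v)
  obtain ⟨u, huL, hu⟩ := G.exists_within_two_of_maximal (hLmax t htK)
    (mem_or_adj_of_removed mem_remaining_succ_iff htK hv hv')
  exact ⟨u, mem_biUnion.2 ⟨t, mem_range.2 htK, huL⟩, hu⟩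
end

section
/- Let G be a graph with m edges on vertex set V of size n, where each vertex v joins T independently with probability q = sqrt(n/m) (assume m >= n). After removing T ∪ N(T), the expected number of remaining edges is at most (1/(2e)) * sqrt(n * m). -/
/-!
Encode `T` by `ω : V → Bool`. An edge survives only if no neighbour of either endpoint `v`
joins `T`, an event of probability `(1 - q) ^ deg v ≤ exp (-q deg v)`. Charging each edge to
both of its darts gives `2 E[rem] ≤ ∑ v, deg v (1 - q) ^ deg v`, and `x exp (-x) ≤ exp (-1)`
bounds every term by `1 / (e q)`; finally `n / q = √(n m)`.
-/

open Finset

theorem mul_one_sub_pow_le_exp_neg_one {q : ℝ} (hq₀ : 0 ≤ q) (hq₁ : q ≤ 1) (d : ℕ) :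
    q * d * (1 - q) ^ d ≤ Real.exp (-1) :=
  calc q * d * (1 - q) ^ d ≤ q * d * Real.exp (-q) ^ d := by
        gcongr
        exact Real.one_sub_le_exp_neg q
    _ = q * d * Real.exp (-(q * d)) := by rw [← Real.exp_nat_mul]; ring_nf
    _ ≤ Real.exp (-1) := Real.mul_exp_neg_le_exp_neg_one _

theorem div_sqrt_div {x : ℝ} (hx : 0 ≤ x) (y : ℝ) : x / √(x / y) = √(x * y) := by
  rw [Real.sqrt_div hx, Real.sqrt_mul hx, div_div_eq_mul_div, mul_div_right_comm, Real.div_sqrt]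

section

variable {V : Type*} [Fintype V]

noncomputable def bernoulliWeight (q : ℝ) (ω : V → Bool) : ℝ :=
  ∏ v, if ω v then q else 1 - q

theorem bernoulliWeight_nonneg {q : ℝ} (hq₀ : 0 ≤ q) (hq₁ : q ≤ 1) (ω : V → Bool) :
    0 ≤ bernoulliWeight q ω :=
  prod_nonneg fun v _ => by split <;> linarith

theorem sum_bernoulliWeight_forall_false [DecidableEq V] (q : ℝ) (S : Finset V) :
    ∑ ω with ∀ v ∈ S, ω v = false, bernoulliWeight q ω = (1 - q) ^ #S := by
  let f : V → Bool → ℝ := fun v b => if b then (if v ∈ S then 0 else q) else 1 - q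
  have h_restrict (ω : V → Bool) :
      (if ∀ v ∈ S, ω v = false then bernoulliWeight q ω else 0) = ∏ v, f v (ω v) := by
    split_ifs with h
    · refine prod_congr rfl fun v _ => ?_
      by_cases hv : v ∈ S <;> simp [f, hv, h]
    · push Not at h
      obtain ⟨v, hvS, hv⟩ := h
      exact (prod_eq_zero (mem_univ v) (by simp [f, hvS, hv])).symm
  have h_factor (v : V) : ∑ b, f v b = if v ∈ S then 1 - q else 1 := by
    by_cases hv : v ∈ S <;> simp [f, hv]
  rw [sum_filter, Fintype.sum_congr _ _ h_restrict, ← Fintype.prod_sum,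
    Fintype.prod_congr _ _ h_factor, prod_ite_mem, univ_inter, prod_const]

namespace SimpleGraph

variable [DecidableEq V] (G : SimpleGraph V) [DecidableRel G.Adj]

theorem sum_darts_edge {M : Type*} [AddCommMonoid M] (f : Sym2 V → M) :
    ∑ d : G.Dart, f d.edge = 2 • ∑ e ∈ G.edgeFinset, f e := by
  rw [← sum_fiberwise_of_maps_to (g := Dart.edge) (t := G.edgeFinset)
    (fun d _ => G.mem_edgeFinset.mpr d.edge_mem), smul_sum]
  refine sum_congr rfl fun e he => ?_
  rw [sum_congr rfl fun d hd => congrArg f (mem_filter.mp hd).2, sum_const,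
    G.dart_edge_fiber_card e (G.mem_edgeFinset.mp he)]

theorem sum_darts_fst {M : Type*} [AddCommMonoid M] (g : V → M) :
    ∑ d : G.Dart, g d.fst = ∑ v, G.degree v • g v := by
  rw [← sum_fiberwise_of_maps_to (g := fun d : G.Dart => d.fst) (t := univ)
    (fun d _ => mem_univ _)]
  refine sum_congr rfl fun v _ => ?_
  rw [sum_congr rfl fun d hd => congrArg g (mem_filter.mp hd).2, sum_const,
    G.dart_fst_fiber_card_eq_degree]

def survivingEdges (ω : V → Bool) : Finset (Sym2 V) :=
  G.edgeFinset.filter (fun e => ∀ v ∈ e, ω v = false ∧ ∀ u : V, G.Adj v u → ω u = false)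

theorem sum_bernoulliWeight_mem_survivingEdges_le {q : ℝ} (hq₀ : 0 ≤ q) (hq₁ : q ≤ 1)
    {e : Sym2 V} {v : V} (hv : v ∈ e) :
    ∑ ω with e ∈ G.survivingEdges ω, bernoulliWeight q ω ≤ (1 - q) ^ G.degree v :=
  calc ∑ ω with e ∈ G.survivingEdges ω, bernoulliWeight q ω
      ≤ ∑ ω with ∀ u ∈ G.neighborFinset v, ω u = false, bernoulliWeight q ω := by
        refine sum_le_sum_of_subset_of_nonneg (monotone_filter_right _ fun ω _ hω u hu => ?_)
          fun ω _ _ => bernoulliWeight_nonneg hq₀ hq₁ ω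
        exact ((mem_filter.mp hω).2 v hv).2 u ((G.mem_neighborFinset v u).mp hu)
    _ = (1 - q) ^ G.degree v := by
        rw [sum_bernoulliWeight_forall_false, card_neighborFinset_eq_degree]

theorem sum_bernoulliWeight_mul_card_survivingEdges (q : ℝ) :
    ∑ ω, bernoulliWeight q ω * #(G.survivingEdges ω)
      = ∑ e ∈ G.edgeFinset, ∑ ω with e ∈ G.survivingEdges ω, bernoulliWeight q ω := by
  simp_rw [mul_comm (bernoulliWeight q _), ← nsmul_eq_mul, ← sum_const]
  exact sum_comm' fun ω e => by
    simpa using fun he : e ∈ G.survivingEdges ω => filter_subset _ _ he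

theorem two_mul_sum_bernoulliWeight_mul_card_survivingEdges_le {q : ℝ} (hq₀ : 0 ≤ q)
    (hq₁ : q ≤ 1) :
    2 * ∑ ω, bernoulliWeight q ω * #(G.survivingEdges ω)
      ≤ ∑ v, G.degree v * (1 - q) ^ G.degree v := by
  rw [sum_bernoulliWeight_mul_card_survivingEdges, ← Nat.ofNat_nsmul_eq_mul, ← sum_darts_edge]
  calc ∑ d : G.Dart, ∑ ω with d.edge ∈ G.survivingEdges ω, bernoulliWeight q ω
      ≤ ∑ d : G.Dart, (1 - q) ^ G.degree d.fst :=
        sum_le_sum fun d _ =>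
          G.sum_bernoulliWeight_mem_survivingEdges_le hq₀ hq₁ (Sym2.mem_mk_left _ _)
    _ = ∑ v, G.degree v * (1 - q) ^ G.degree v := by
        simp only [G.sum_darts_fst fun v => (1 - q) ^ G.degree v, nsmul_eq_mul]

end SimpleGraph

end

theorem expected_remaining_edges_general {V : Type*} [Fintype V] [DecidableEq V]
    (G : SimpleGraph V) [DecidableRel G.Adj]
    (n m : ℕ) (hn : n = Fintype.card V)
    (h1 : 1 ≤ n) (hmn : n ≤ m)
    (q : ℝ) (hq : q = Real.sqrt ((n : ℝ) / m))
    (P : (V → Bool) → ℝ) (hP : ∀ ω, P ω = ∏ v, (if ω v then q else 1 - q))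
    (rem : (V → Bool) → ℕ)
    (hrem : ∀ ω, rem ω = (G.edgeFinset.filter
      (fun e => ∀ v ∈ e, ω v = false ∧ ∀ u : V, G.Adj v u → ω u = false)).card) :
    ∑ ω : V → Bool, P ω * rem ω ≤ (1 / (2 * Real.exp 1)) * Real.sqrt ((n : ℝ) * m) := by
  obtain rfl : P = bernoulliWeight q := funext hP
  obtain rfl : rem = fun ω => #(G.survivingEdges ω) := funext hrem
  have hn₀ : (0 : ℝ) < n := by exact_mod_cast h1
  have hnm : (n : ℝ) ≤ m := by exact_mod_cast hmn
  have hq₀ : 0 < q := hq ▸ Real.sqrt_pos.mpr (div_pos hn₀ (hn₀.trans_le hnm))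
  have hq₁ : q ≤ 1 := hq ▸ Real.sqrt_le_one.mpr ((div_le_one (hn₀.trans_le hnm)).mpr hnm)
  have h_degrees : q * ∑ v, G.degree v * (1 - q) ^ G.degree v ≤ n * Real.exp (-1) := by
    calc q * ∑ v, (G.degree v : ℝ) * (1 - q) ^ G.degree v
        = ∑ v, q * G.degree v * (1 - q) ^ G.degree v := by simp only [mul_sum, mul_assoc]
      _ ≤ ∑ _v : V, Real.exp (-1) :=
        sum_le_sum fun v _ => mul_one_sub_pow_le_exp_neg_one hq₀.le hq₁ _
      _ = n * Real.exp (-1) := by rw [sum_const, card_univ, hn, nsmul_eq_mul]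
  calc ∑ ω, bernoulliWeight q ω * #(G.survivingEdges ω)
      ≤ n * Real.exp (-1) / (2 * q) := by
        rw [le_div_iff₀ (by positivity)]
        calc _ = q * (2 * ∑ ω, bernoulliWeight q ω * #(G.survivingEdges ω)) := by ring
          _ ≤ q * ∑ v, G.degree v * (1 - q) ^ G.degree v := by
            gcongr
            exact G.two_mul_sum_bernoulliWeight_mul_card_survivingEdges_le hq₀.le hq₁
          _ ≤ n * Real.exp (-1) := h_degrees
    _ = 1 / (2 * Real.exp 1) * (n / q) := by rw [Real.exp_neg]; ring
    _ = 1 / (2 * Real.exp 1) * √(n * m) := by rw [hq, div_sqrt_div hn₀.le]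

/-- Each vertex joins `T` independently with probability `q = √(n/m)`. After removing
`T ∪ N(T)`, the expected number of remaining edges is at most `(1/(2e)) √(n m)`.
A vertex survives iff it did not join `T` and no neighbor of it joined `T`. -/
theorem expected_remaining_edges {V : Type*} [Fintype V] [DecidableEq V]
    (G : SimpleGraph V) [DecidableRel G.Adj]
    (n m : ℕ) (hn : n = Fintype.card V) (hm : m = G.edgeFinset.card)
    (h1 : 1 ≤ n) (hmn : n ≤ m)
    (q : ℝ) (hq : q = Real.sqrt ((n : ℝ) / m))
    (P : (V → Bool) → ℝ) (hP : ∀ ω, P ω = ∏ v, (if ω v then q else 1 - q))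
    (rem : (V → Bool) → ℕ)
    (hrem : ∀ ω, rem ω = (G.edgeFinset.filter
      (fun e => ∀ v ∈ e, ω v = false ∧ ∀ u : V, G.Adj v u → ω u = false)).card) :
    ∑ ω : V → Bool, P ω * rem ω ≤ (1 / (2 * Real.exp 1)) * Real.sqrt ((n : ℝ) * m) :=
  expected_remaining_edges_general G n m hn h1 hmn q hq P hP rem hrem
end
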